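/- arXiv:1906.11482 — 2 statements merged into one kernel-verified Lean document; each statement's English description precedes it below -/
import Mathlib

section
/- Let H be a finite simple graph and v a non-isolated vertex of H, and let G = Tr(H,v) be the graph obtained from H by Trung's construction at v. Then the independence number of G equals the independence number of H plus one: α(Tr(H,v)) = α(H) + 1. -/
open scoped Classical

/-- A finset of vertices is independent if no two of its members are adjacent. -/
def IsIndep {W : Type*} (G : SimpleGraph W) (s : Finset W) : Prop :=
  ∀ x ∈ s, ∀ y ∈ s, ¬ G.Adj x y

/-- A maximal independent set: independent and not properly contained in another
independent set. -/
def IsMaxIndep {W : Type*} (G : SimpleGraph W) (s : Finset W) : Prop :=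
  IsIndep G s ∧ ∀ t : Finset W, IsIndep G t → s ⊆ t → t = s

/-- The independence number `α(G)`: the maximum size of an independent set. -/
noncomputable def indepNum {W : Type*} (G : SimpleGraph W) [Fintype W] : ℕ :=
  sSup {n | ∃ s : Finset W, IsIndep G s ∧ s.card = n}

/-- Trung's construction `Tr(H, v)`: three new vertices `a = Sum.inr 0`, `b = Sum.inr 1`,
`c = Sum.inr 2` are added to `H`; `c` is joined to `b` and to every neighbor of `v`,
`b` is joined to `a`, and `a` is joined to `v`. -/
def Tr {V : Type*} (H : SimpleGraph V) (v : V) : SimpleGraph (V ⊕ Fin 3) :=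
  SimpleGraph.fromRel (fun x y =>
    match x, y with
    | Sum.inl x, Sum.inl y => H.Adj x y
    | Sum.inl x, Sum.inr i => (i = 0 ∧ x = v) ∨ (i = 2 ∧ H.Adj x v)
    | Sum.inr i, Sum.inr j => (i = 0 ∧ j = 1) ∨ (i = 1 ∧ j = 2)
    | _, _ => False)

/-- The set of vertices remaining after deleting the closed neighborhood `N[F]`
of a set `F` of vertices. -/
def offNbhd {V : Type*} (G : SimpleGraph V) (F : Set V) : Set V :=
  {w | w ∉ F ∧ ∀ u ∈ F, ¬ G.Adj u w}

/-- `G_F`: the induced subgraph of `G` on `V(G) \ N[F]`. -/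
def delNbhd {V : Type*} (G : SimpleGraph V) (F : Set V) : SimpleGraph (offNbhd G F) :=
  G.induce (offNbhd G F)

/-- `H_v = H \ N[v]`. -/
def delVert {V : Type*} (H : SimpleGraph V) (v : V) : SimpleGraph (offNbhd H {v}) :=
  delNbhd H {v}

/-- The independence polynomial `I(G, x) = Σ_i a_i x^i` of a finite graph,
as a polynomial over `ℚ`. -/
noncomputable def indepPoly {W : Type*} (G : SimpleGraph W) [Fintype W] : Polynomial ℚ :=
  ∑ s ∈ Finset.univ.filter (fun s : Finset W => IsIndep G s),
    (Polynomial.X : Polynomial ℚ) ^ s.card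

/-- `a_i(G)`: the number of independent sets of size `i`, indexed by `ℤ`
(so that it is `0` for `i < 0`). -/
noncomputable def numIndep {W : Type*} (G : SimpleGraph W) [Fintype W] (i : ℤ) : ℕ :=
  (Finset.univ.filter (fun s : Finset W => IsIndep G s ∧ (s.card : ℤ) = i)).card

/-- A finite graph is well-covered if every maximal independent set has size `α(G)`. -/
def WellCovered {W : Type*} (G : SimpleGraph W) [Fintype W] : Prop :=
  ∀ s : Finset W, IsMaxIndep G s → s.card = indepNum G

/-- A finite graph is a `W₂` graph if it has at least two vertices and every pair of
disjoint independent sets is contained in a pair of disjoint maximum independent sets. -/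
def IsW2 {W : Type*} (G : SimpleGraph W) [Fintype W] : Prop :=
  2 ≤ Fintype.card W ∧
    ∀ A B : Finset W, IsIndep G A → IsIndep G B → Disjoint A B →
      ∃ A' B' : Finset W, IsIndep G A' ∧ IsIndep G B' ∧ Disjoint A' B' ∧
        A ⊆ A' ∧ B ⊆ B' ∧ A'.card = indepNum G ∧ B'.card = indepNum G

section TrAdj
variable {V : Type*} (H : SimpleGraph V) (v : V)

lemma tr_inl_inl (x y : V) : (Tr H v).Adj (Sum.inl x) (Sum.inl y) ↔ H.Adj x y := by
  simp [Tr, SimpleGraph.fromRel_adj]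
  constructor
  · rintro ⟨-, h | h⟩
    exacts [h, h.symm]
  · intro h; exact ⟨fun e => H.irrefl (e ▸ h), Or.inl h⟩

lemma tr_inl_inr (x : V) (i : Fin 3) :
    (Tr H v).Adj (Sum.inl x) (Sum.inr i) ↔ (i = 0 ∧ x = v) ∨ (i = 2 ∧ H.Adj x v) := by
  simp [Tr, SimpleGraph.fromRel_adj]

lemma tr_inr_inl (x : V) (i : Fin 3) :
    (Tr H v).Adj (Sum.inr i) (Sum.inl x) ↔ (i = 0 ∧ x = v) ∨ (i = 2 ∧ H.Adj x v) := by
  rw [SimpleGraph.adj_comm]; exact tr_inl_inr H v x i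

lemma tr_inr_inr (i j : Fin 3) :
    (Tr H v).Adj (Sum.inr i) (Sum.inr j) ↔
      (i = 0 ∧ j = 1) ∨ (i = 1 ∧ j = 2) ∨ (j = 0 ∧ i = 1) ∨ (j = 1 ∧ i = 2) := by
  simp [Tr, SimpleGraph.fromRel_adj]
  fin_cases i <;> fin_cases j <;> simp

end TrAdj

section Num
variable {W : Type*} (G : SimpleGraph W) [Fintype W]

lemma indep_empty : IsIndep G (∅ : Finset W) := fun x hx => absurd hx (Finset.notMem_empty x)

lemma indep_set_nonempty : {n | ∃ s : Finset W, IsIndep G s ∧ s.card = n}.Nonempty :=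
  ⟨0, ∅, indep_empty G, rfl⟩

lemma indep_set_bdd : BddAbove {n | ∃ s : Finset W, IsIndep G s ∧ s.card = n} := by
  refine ⟨Fintype.card W, ?_⟩
  rintro n ⟨s, -, rfl⟩
  exact Finset.card_le_univ s

lemma card_le_indepNum {s : Finset W} (h : IsIndep G s) : s.card ≤ indepNum G :=
  le_csSup (indep_set_bdd G) ⟨s, h, rfl⟩

lemma indepNum_le {m : ℕ} (h : ∀ s : Finset W, IsIndep G s → s.card ≤ m) : indepNum G ≤ m := by
  apply csSup_le (indep_set_nonempty G)
  rintro n ⟨s, hs, rfl⟩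
  exact h s hs

lemma exists_max_indep : ∃ s : Finset W, IsIndep G s ∧ s.card = indepNum G :=
  Nat.sSup_mem (indep_set_nonempty G) (indep_set_bdd G)

end Num

theorem indepNum_Tr {V : Type*} [Fintype V] (H : SimpleGraph V) (v : V)
    (hv : ∃ u, H.Adj v u) :
    indepNum (Tr H v) = indepNum H + 1 := by
  apply le_antisymm
  · -- upper bound
    apply indepNum_le
    intro t ht
    classical
    set A : Finset (V ⊕ Fin 3) := t.filter (fun x => x.isLeft) with hA
    set B : Finset (V ⊕ Fin 3) := t.filter (fun x => ¬ x.isLeft) with hB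
    have hcard : A.card + B.card = t.card := Finset.card_filter_add_card_filter_not _
    set sH : Finset V := t.preimage Sum.inl (Sum.inl_injective.injOn) with hsH
    have hAim : sH.image Sum.inl = A := by
      ext x
      rcases x with x | i
      · simp [hsH, hA, Finset.mem_preimage]
      · simp [hA]
    have hAcard : A.card = sH.card := by
      rw [← hAim, Finset.card_image_of_injective _ Sum.inl_injective]
    have hsHmem : ∀ x ∈ sH, Sum.inl x ∈ t := by
      intro x hx; simpa [hsH, Finset.mem_preimage] using hx
    have hsHindep : IsIndep H sH := by
      intro x hx y hy hadj
      exact ht _ (hsHmem x hx) _ (hsHmem y hy) ((tr_inl_inl H v x y).2 hadj)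
    by_cases hac : Sum.inr (0 : Fin 3) ∈ t ∧ Sum.inr (2 : Fin 3) ∈ t
    · -- both a and c in t: sH ∪ {v} independent, and inr 1 ∉ t
      have hvnot : v ∉ sH := by
        intro hvs
        exact ht _ (hsHmem v hvs) _ hac.1 ((tr_inl_inr H v v 0).2 (Or.inl ⟨rfl, rfl⟩))
      have hvadj : ∀ x ∈ sH, ¬ H.Adj x v := by
        intro x hx hadj
        exact ht _ (hsHmem x hx) _ hac.2 ((tr_inl_inr H v x 2).2 (Or.inr ⟨rfl, hadj⟩))
      have hins : IsIndep H (insert v sH) := by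
        intro x hx y hy hadj
        rcases Finset.mem_insert.1 hx with hx' | hx'
        · rcases Finset.mem_insert.1 hy with hy' | hy'
          · subst hx'; subst hy'; exact H.irrefl hadj
          · subst hx'; exact hvadj y hy' hadj.symm
        · rcases Finset.mem_insert.1 hy with hy' | hy'
          · subst hy'; exact hvadj x hx' hadj
          · exact hsHindep x hx' y hy' hadj
      have h1 : sH.card + 1 ≤ indepNum H := by
        have := card_le_indepNum H hins
        rwa [Finset.card_insert_of_notMem hvnot] at this
      have hb1 : Sum.inr (1 : Fin 3) ∉ t := by
        intro h1t
        exact ht _ hac.1 _ h1t ((tr_inr_inr H v 0 1).2 (Or.inl ⟨rfl, rfl⟩))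
      have hBsub : B ⊆ {Sum.inr (0 : Fin 3), Sum.inr (2 : Fin 3)} := by
        intro x hx
        rcases x with x | i
        · simp [hB] at hx
        · have hit : Sum.inr i ∈ t := (Finset.mem_filter.1 hx).1
          fin_cases i
          · simp
          · exact absurd hit hb1
          · simp
      have hB2 : B.card ≤ 2 := le_trans (Finset.card_le_card hBsub)
        (le_trans (Finset.card_insert_le _ _) (by simp))
      omega
    · -- B has at most one element
      have hB1 : B.card ≤ 1 := by
        by_contra h
        push_neg at h
        obtain ⟨x, hx, y, hy, hxy⟩ := Finset.one_lt_card.1 h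
        have hxt := (Finset.mem_filter.1 hx).1
        have hyt := (Finset.mem_filter.1 hy).1
        rcases x with x | i
        · simp [hB] at hx
        rcases y with y | j
        · simp [hB] at hy
        have hnadj := ht _ hxt _ hyt
        rw [tr_inr_inr] at hnadj
        have hij : i ≠ j := fun e => hxy (by rw [e])
        fin_cases i <;> fin_cases j <;> simp_all
      have := card_le_indepNum H hsHindep
      omega
  · -- lower bound
    obtain ⟨s, hs, hcard⟩ := exists_max_indep H
    have hnot : Sum.inr (1 : Fin 3) ∉ s.image Sum.inl := by simp
    have hindep : IsIndep (Tr H v) (insert (Sum.inr 1) (s.image Sum.inl)) := by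
      intro x hx y hy hadj
      rcases Finset.mem_insert.1 hx with rfl | hx
      · rcases Finset.mem_insert.1 hy with rfl | hy
        · exact (Tr H v).irrefl hadj
        · obtain ⟨y', hy', rfl⟩ := Finset.mem_image.1 hy
          rw [tr_inr_inl] at hadj
          simp at hadj
      · obtain ⟨x', hx', rfl⟩ := Finset.mem_image.1 hx
        rcases Finset.mem_insert.1 hy with rfl | hy
        · rw [tr_inl_inr] at hadj
          simp at hadj
        · obtain ⟨y', hy', rfl⟩ := Finset.mem_image.1 hy
          rw [tr_inl_inl] at hadj
          exact hs x' hx' y' hy' hadj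
    have := card_le_indepNum (Tr H v) hindep
    rwa [Finset.card_insert_of_notMem hnot,
      Finset.card_image_of_injective _ Sum.inl_injective, hcard] at this
end

section
/- Let H be a finite simple graph and v a non-isolated vertex of H, and let G = Tr(H,v). Then: (i) for every maximal independent set F of G there is a maximal independent set of H of size |F| − 1; and (ii) every maximal independent set of H can be extended to a maximal independent set of G having exactly one more vertex. Consequently, the set of sizes of maximal independent sets of G is exactly {k + 1 : k is the size of some maximal independent set of H}. -/
open scoped Classical

section TrAux

variable {V : Type*} {H : SimpleGraph V} {v : V}

lemma isMaxIndep_iff {W : Type*} (G : SimpleGraph W) (s : Finset W) :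
    IsMaxIndep G s ↔ IsIndep G s ∧ ∀ w ∉ s, ∃ y ∈ s, G.Adj w y := by
  constructor
  · rintro ⟨h1, h2⟩
    refine ⟨h1, fun w hw => ?_⟩
    by_contra hno
    push_neg at hno
    have hins : IsIndep G (insert w s) := by
      intro x hx y hy hxy
      rcases Finset.mem_insert.mp hx with hx' | hx'
      · rcases Finset.mem_insert.mp hy with hy' | hy'
        · subst hx'; subst hy'; exact G.irrefl hxy
        · subst hx'; exact hno y hy' hxy
      · rcases Finset.mem_insert.mp hy with hy' | hy'
        · subst hy'; exact hno x hx' hxy.symm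
        · exact h1 x hx' y hy' hxy
    have := h2 _ hins (Finset.subset_insert _ _)
    exact hw (this ▸ Finset.mem_insert_self w s)
  · rintro ⟨h1, h2⟩
    refine ⟨h1, fun t ht hst => ?_⟩
    by_contra hne
    obtain ⟨w, hwt, hws⟩ := Finset.exists_of_ssubset (hst.ssubset_of_ne (Ne.symm hne))
    obtain ⟨y, hy, hadj⟩ := h2 w hws
    exact ht w hwt y (hst hy) hadj

lemma tr_adj_inl_inl {x y : V} : (Tr H v).Adj (Sum.inl x) (Sum.inl y) ↔ H.Adj x y := by
  rw [Tr, SimpleGraph.fromRel_adj]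
  constructor
  · rintro ⟨-, h | h⟩
    · exact h
    · exact h.symm
  · exact fun h => ⟨by simpa using h.ne, Or.inl h⟩

lemma tr_adj_inl_inr {x : V} {i : Fin 3} :
    (Tr H v).Adj (Sum.inl x) (Sum.inr i) ↔ (i = 0 ∧ x = v) ∨ (i = 2 ∧ H.Adj x v) := by
  rw [Tr, SimpleGraph.fromRel_adj]
  constructor
  · rintro ⟨-, h | h⟩
    · exact h
    · exact h.elim
  · exact fun h => ⟨by simp, Or.inl h⟩

lemma tr_adj_inr_inl {x : V} {i : Fin 3} :
    (Tr H v).Adj (Sum.inr i) (Sum.inl x) ↔ (i = 0 ∧ x = v) ∨ (i = 2 ∧ H.Adj x v) := by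
  rw [SimpleGraph.adj_comm]; exact tr_adj_inl_inr

lemma tr_adj_inr_inr {i j : Fin 3} :
    (Tr H v).Adj (Sum.inr i : V ⊕ Fin 3) (Sum.inr j) ↔
      (i = 0 ∧ j = 1) ∨ (i = 1 ∧ j = 2) ∨ (j = 0 ∧ i = 1) ∨ (j = 1 ∧ i = 2) := by
  rw [Tr, SimpleGraph.fromRel_adj]
  constructor
  · rintro ⟨-, h | h⟩
    · exact h.imp id Or.inl
    · rcases h with h | h
      · exact Or.inr (Or.inr (Or.inl h))
      · exact Or.inr (Or.inr (Or.inr h))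
  · rintro (⟨rfl, rfl⟩ | ⟨rfl, rfl⟩ | ⟨rfl, rfl⟩ | ⟨rfl, rfl⟩)
    · exact ⟨by simp, Or.inl (Or.inl ⟨rfl, rfl⟩)⟩
    · exact ⟨by simp, Or.inl (Or.inr ⟨rfl, rfl⟩)⟩
    · exact ⟨by simp, Or.inr (Or.inl ⟨rfl, rfl⟩)⟩
    · exact ⟨by simp, Or.inr (Or.inr ⟨rfl, rfl⟩)⟩

lemma fin3_trich : ∀ i : Fin 3, i = 0 ∨ i = 1 ∨ i = 2 := by decide

lemma tr_part1 (F : Finset (V ⊕ Fin 3)) (hF : IsMaxIndep (Tr H v) F) :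
    ∃ M : Finset V, IsMaxIndep H M ∧ M.card + 1 = F.card := by
  rw [isMaxIndep_iff] at hF
  obtain ⟨hind, hmax⟩ := hF
  set M := F.toLeft with hMdef
  have hmemL : ∀ x : V, Sum.inl x ∈ F ↔ x ∈ M := fun x => Finset.mem_toLeft.symm
  have hcard : M.card + F.toRight.card = F.card := F.card_toLeft_add_card_toRight
  have hMind : IsIndep H M := fun x hx y hy hxy =>
    hind _ ((hmemL x).mpr hx) _ ((hmemL y).mpr hy) (tr_adj_inl_inl.mpr hxy)
  by_cases hb : Sum.inr (1 : Fin 3) ∈ F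
  · -- F ∩ {a,b,c} = {b}
    have h0 : Sum.inr (0 : Fin 3) ∉ F := fun h =>
      hind _ h _ hb (tr_adj_inr_inr.mpr (Or.inl ⟨rfl, rfl⟩))
    have h2 : Sum.inr (2 : Fin 3) ∉ F := fun h =>
      hind _ hb _ h (tr_adj_inr_inr.mpr (Or.inr (Or.inl ⟨rfl, rfl⟩)))
    have hT : F.toRight = {1} := by
      ext i
      rcases fin3_trich i with rfl | rfl | rfl <;>
        simp [Finset.mem_toRight, h0, hb, h2]
    refine ⟨M, (isMaxIndep_iff H M).mpr ⟨hMind, ?_⟩, by rw [hT] at hcard; simpa using hcard⟩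
    intro w hw
    obtain ⟨y, hy, hadj⟩ := hmax (Sum.inl w) (fun h => hw ((hmemL w).mp h))
    cases y with
    | inl u => exact ⟨u, (hmemL u).mp hy, tr_adj_inl_inl.mp hadj⟩
    | inr i =>
      exfalso
      rcases tr_adj_inl_inr.mp hadj with ⟨h, -⟩ | ⟨h, -⟩ <;> subst h
      · exact h0 hy
      · exact h2 hy
  · by_cases ha : Sum.inr (0 : Fin 3) ∈ F
    · have hvM : v ∉ M := fun h =>
        hind _ ((hmemL v).mpr h) _ ha (tr_adj_inl_inr.mpr (Or.inl ⟨rfl, rfl⟩))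
      by_cases hc2 : Sum.inr (2 : Fin 3) ∈ F
      · -- F ∩ {a,b,c} = {a, c} : use M ∪ {v}
        have hnoN : ∀ x ∈ M, ¬ H.Adj x v := fun x hx hxv =>
          hind _ ((hmemL x).mpr hx) _ hc2 (tr_adj_inl_inr.mpr (Or.inr ⟨rfl, hxv⟩))
        have hT : F.toRight = {0, 2} := by
          ext i
          rcases fin3_trich i with rfl | rfl | rfl <;>
            simp [Finset.mem_toRight, ha, hb, hc2]
        refine ⟨insert v M, (isMaxIndep_iff H _).mpr ⟨?_, ?_⟩, ?_⟩
        · intro x hx y hy hxy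
          rcases Finset.mem_insert.mp hx with hx' | hx' <;>
            rcases Finset.mem_insert.mp hy with hy' | hy'
          · subst hx'; subst hy'; exact H.irrefl hxy
          · subst hx'; exact hnoN y hy' hxy.symm
          · subst hy'; exact hnoN x hx' hxy
          · exact hMind x hx' y hy' hxy
        · intro w hw
          have hwv : w ≠ v := fun h => hw (by rw [h]; exact Finset.mem_insert_self _ _)
          have hwM : w ∉ M := fun h => hw (Finset.mem_insert_of_mem h)
          obtain ⟨y, hy, hadj⟩ := hmax (Sum.inl w) (fun h => hwM ((hmemL w).mp h))
          cases y with
          | inl u => exact ⟨u, Finset.mem_insert_of_mem ((hmemL u).mp hy), tr_adj_inl_inl.mp hadj⟩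
          | inr i =>
            rcases tr_adj_inl_inr.mp hadj with ⟨-, h⟩ | ⟨-, h⟩
            · exact absurd h hwv
            · exact ⟨v, Finset.mem_insert_self _ _, h⟩
        · rw [Finset.card_insert_of_notMem hvM]
          rw [hT] at hcard
          have h02 : ({0, 2} : Finset (Fin 3)).card = 2 := by decide
          rw [h02] at hcard
          omega
      · -- F ∩ {a,b,c} = {a}
        have hT : F.toRight = {0} := by
          ext i
          rcases fin3_trich i with rfl | rfl | rfl <;>
            simp [Finset.mem_toRight, ha, hb, hc2]
        obtain ⟨y, hy, hadjc⟩ := hmax (Sum.inr 2) hc2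
        have hu : ∃ u ∈ M, H.Adj u v := by
          cases y with
          | inl u =>
            rcases tr_adj_inr_inl.mp hadjc with ⟨h, -⟩ | ⟨-, h⟩
            · exact absurd h (by decide)
            · exact ⟨u, (hmemL u).mp hy, h⟩
          | inr j =>
            exfalso
            rcases tr_adj_inr_inr.mp hadjc with ⟨h, -⟩ | ⟨h, -⟩ | ⟨-, h⟩ | ⟨h, -⟩
            · exact absurd h (by decide)
            · exact absurd h (by decide)
            · exact absurd h (by decide)
            · subst h; exact hb hy
        obtain ⟨u1, hu1M, hu1⟩ := hu
        refine ⟨M, (isMaxIndep_iff H M).mpr ⟨hMind, ?_⟩, by rw [hT] at hcard; simpa using hcard⟩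
        intro w hw
        obtain ⟨y, hy, hadj⟩ := hmax (Sum.inl w) (fun h => hw ((hmemL w).mp h))
        cases y with
        | inl u => exact ⟨u, (hmemL u).mp hy, tr_adj_inl_inl.mp hadj⟩
        | inr i =>
          rcases tr_adj_inl_inr.mp hadj with ⟨-, h⟩ | ⟨hi, -⟩
          · subst h; exact ⟨u1, hu1M, hu1.symm⟩
          · subst hi; exact absurd hy hc2
    · by_cases hc2 : Sum.inr (2 : Fin 3) ∈ F
      · -- F ∩ {a,b,c} = {c}
        have hT : F.toRight = {2} := by
          ext i
          rcases fin3_trich i with rfl | rfl | rfl <;>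
            simp [Finset.mem_toRight, ha, hb, hc2]
        have hvM : v ∈ M := by
          obtain ⟨y, hy, hadj⟩ := hmax (Sum.inr 0) ha
          cases y with
          | inl x =>
            rcases tr_adj_inr_inl.mp hadj with ⟨-, h⟩ | ⟨h, -⟩
            · exact h ▸ (hmemL x).mp hy
            · exact absurd h (by decide)
          | inr j =>
            exfalso
            rcases tr_adj_inr_inr.mp hadj with ⟨-, h⟩ | ⟨h, -⟩ | ⟨-, h⟩ | ⟨-, h⟩
            · subst h; exact hb hy
            · exact absurd h (by decide)
            · exact absurd h (by decide)
            · exact absurd h (by decide)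
        refine ⟨M, (isMaxIndep_iff H M).mpr ⟨hMind, ?_⟩, by rw [hT] at hcard; simpa using hcard⟩
        intro w hw
        obtain ⟨y, hy, hadj⟩ := hmax (Sum.inl w) (fun h => hw ((hmemL w).mp h))
        cases y with
        | inl u => exact ⟨u, (hmemL u).mp hy, tr_adj_inl_inl.mp hadj⟩
        | inr i =>
          rcases tr_adj_inl_inr.mp hadj with ⟨-, h⟩ | ⟨-, h⟩
          · subst h; exact absurd hvM hw
          · exact ⟨v, hvM, h⟩
      · -- impossible: b could be added
        exfalso
        obtain ⟨y, hy, hadj⟩ := hmax (Sum.inr 1) hb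
        cases y with
        | inl x =>
          rcases tr_adj_inr_inl.mp hadj with ⟨h, -⟩ | ⟨h, -⟩ <;> exact absurd h (by decide)
        | inr j =>
          rcases tr_adj_inr_inr.mp hadj with ⟨h, -⟩ | ⟨-, h⟩ | ⟨h, -⟩ | ⟨-, h⟩
          · exact absurd h (by decide)
          · subst h; exact hc2 hy
          · subst h; exact ha hy
          · exact absurd h (by decide)

lemma tr_part2 (M : Finset V) (hM : IsMaxIndep H M) :
    ∃ F : Finset (V ⊕ Fin 3), IsMaxIndep (Tr H v) F ∧
      M.map ⟨Sum.inl, Sum.inl_injective⟩ ⊆ F ∧ F.card = M.card + 1 := by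
  rw [isMaxIndep_iff] at hM
  obtain ⟨hind, hmax⟩ := hM
  have hsub : ∀ T : Finset (Fin 3), M.map ⟨Sum.inl, Sum.inl_injective⟩ ⊆ M.disjSum T := by
    intro T z hz
    obtain ⟨x, hx, rfl⟩ := Finset.mem_map.mp hz
    exact Finset.inl_mem_disjSum.mpr hx
  by_cases hvM : v ∈ M
  · refine ⟨M.disjSum {2}, (isMaxIndep_iff _ _).mpr ⟨?_, ?_⟩, hsub _,
      by rw [Finset.card_disjSum]; rfl⟩
    · intro x hx y hy hxy
      cases x with
      | inl x =>
        cases y with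
        | inl y =>
          exact hind x (Finset.inl_mem_disjSum.mp hx) y (Finset.inl_mem_disjSum.mp hy)
            (tr_adj_inl_inl.mp hxy)
        | inr i =>
          have hi : i = 2 := by simpa using Finset.inr_mem_disjSum.mp hy
          subst hi
          rcases tr_adj_inl_inr.mp hxy with ⟨h, -⟩ | ⟨-, h⟩
          · exact absurd h (by decide)
          · exact hind x (Finset.inl_mem_disjSum.mp hx) v hvM h
      | inr i =>
        cases y with
        | inl y =>
          have hi : i = 2 := by simpa using Finset.inr_mem_disjSum.mp hx
          subst hi
          rcases tr_adj_inr_inl.mp hxy with ⟨h, -⟩ | ⟨-, h⟩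
          · exact absurd h (by decide)
          · exact hind y (Finset.inl_mem_disjSum.mp hy) v hvM h
        | inr j =>
          have hi : i = 2 := by simpa using Finset.inr_mem_disjSum.mp hx
          have hj : j = 2 := by simpa using Finset.inr_mem_disjSum.mp hy
          subst hi; subst hj
          exact (Tr H v).irrefl hxy
    · intro w hw
      cases w with
      | inl x =>
        have hx : x ∉ M := fun h => hw (Finset.inl_mem_disjSum.mpr h)
        obtain ⟨u, hu, hadj⟩ := hmax x hx
        exact ⟨Sum.inl u, Finset.inl_mem_disjSum.mpr hu, tr_adj_inl_inl.mpr hadj⟩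
      | inr i =>
        rcases fin3_trich i with rfl | rfl | rfl
        · exact ⟨Sum.inl v, Finset.inl_mem_disjSum.mpr hvM, tr_adj_inr_inl.mpr (Or.inl ⟨rfl, rfl⟩)⟩
        · exact ⟨Sum.inr 2, Finset.inr_mem_disjSum.mpr (by simp),
            tr_adj_inr_inr.mpr (Or.inr (Or.inl ⟨rfl, rfl⟩))⟩
        · exact absurd (Finset.inr_mem_disjSum.mpr (by simp)) hw
  · obtain ⟨u, huM, huv⟩ := hmax v hvM
    refine ⟨M.disjSum {0}, (isMaxIndep_iff _ _).mpr ⟨?_, ?_⟩, hsub _,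
      by rw [Finset.card_disjSum]; rfl⟩
    · intro x hx y hy hxy
      cases x with
      | inl x =>
        cases y with
        | inl y =>
          exact hind x (Finset.inl_mem_disjSum.mp hx) y (Finset.inl_mem_disjSum.mp hy)
            (tr_adj_inl_inl.mp hxy)
        | inr i =>
          have hi : i = 0 := by simpa using Finset.inr_mem_disjSum.mp hy
          subst hi
          rcases tr_adj_inl_inr.mp hxy with ⟨-, h⟩ | ⟨h, -⟩
          · exact hvM (h ▸ Finset.inl_mem_disjSum.mp hx)
          · exact absurd h (by decide)
      | inr i =>
        cases y with
        | inl y =>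
          have hi : i = 0 := by simpa using Finset.inr_mem_disjSum.mp hx
          subst hi
          rcases tr_adj_inr_inl.mp hxy with ⟨-, h⟩ | ⟨h, -⟩
          · exact hvM (h ▸ Finset.inl_mem_disjSum.mp hy)
          · exact absurd h (by decide)
        | inr j =>
          have hi : i = 0 := by simpa using Finset.inr_mem_disjSum.mp hx
          have hj : j = 0 := by simpa using Finset.inr_mem_disjSum.mp hy
          subst hi; subst hj
          exact (Tr H v).irrefl hxy
    · intro w hw
      cases w with
      | inl x =>
        have hx : x ∉ M := fun h => hw (Finset.inl_mem_disjSum.mpr h)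
        obtain ⟨u', hu', hadj⟩ := hmax x hx
        exact ⟨Sum.inl u', Finset.inl_mem_disjSum.mpr hu', tr_adj_inl_inl.mpr hadj⟩
      | inr i =>
        rcases fin3_trich i with rfl | rfl | rfl
        · exact absurd (Finset.inr_mem_disjSum.mpr (by simp)) hw
        · exact ⟨Sum.inr 0, Finset.inr_mem_disjSum.mpr (by simp),
            tr_adj_inr_inr.mpr (Or.inr (Or.inr (Or.inl ⟨rfl, rfl⟩)))⟩
        · exact ⟨Sum.inl u, Finset.inl_mem_disjSum.mpr huM,
            tr_adj_inr_inl.mpr (Or.inr ⟨rfl, huv.symm⟩)⟩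

end TrAux

theorem maxIndep_Tr_sizes {V : Type*} [Fintype V] (H : SimpleGraph V) (v : V)
    (hv : ∃ u, H.Adj v u) :
    (∀ F : Finset (V ⊕ Fin 3), IsMaxIndep (Tr H v) F →
        ∃ M : Finset V, IsMaxIndep H M ∧ M.card + 1 = F.card) ∧
    (∀ M : Finset V, IsMaxIndep H M →
        ∃ F : Finset (V ⊕ Fin 3), IsMaxIndep (Tr H v) F ∧
          M.map ⟨Sum.inl, Sum.inl_injective⟩ ⊆ F ∧ F.card = M.card + 1) ∧
    {n : ℕ | ∃ F : Finset (V ⊕ Fin 3), IsMaxIndep (Tr H v) F ∧ F.card = n} =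
      {n : ℕ | ∃ k : ℕ, (∃ M : Finset V, IsMaxIndep H M ∧ M.card = k) ∧ n = k + 1} := by
  refine ⟨fun F hF => tr_part1 F hF, fun M hM => tr_part2 M hM, ?_⟩
  ext n
  simp only [Set.mem_setOf_eq]
  constructor
  · rintro ⟨F, hF, rfl⟩
    obtain ⟨M, hM, hc⟩ := tr_part1 F hF
    exact ⟨M.card, ⟨M, hM, rfl⟩, hc.symm⟩
  · rintro ⟨k, ⟨M, hM, rfl⟩, rfl⟩
    obtain ⟨F, hF, -, hc⟩ := tr_part2 (v := v) M hM
    exact ⟨F, hF, hc⟩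
end
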